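/- Let μ₁, μ₂ ∈ ℂ with Re μ₁ > 0 and Re μ₂ > 0, and set η = (μ₁² + μ₂²)/2 and p = i(μ₂² − μ₁²)/2. Then σ⁺ := μ₁ + μ₂ is an eigenvalue of A∞(η,p), and every eigenvalue z of A∞(η,p) with z ≠ σ⁺ satisfies Re z < Re σ⁺; symmetrically, σ⁻ := −(μ₁+μ₂) is an eigenvalue and every eigenvalue z ≠ σ⁻ satisfies Re z > Re σ⁻. That is, σ⁺ and σ⁻ are the unique eigenvalues of most positive and most negative real part, respectively. -/
import Mathlib


open Polynomial

noncomputable section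

/-- The asymptotic matrix `A∞(η,p)` of the compound (`Λ²`) system obtained from the
linearization of the complex Ginzburg–Landau equation about the Hocking–Stewartson pulse. -/
def Ainf (η p : ℂ) : Matrix (Fin 6) (Fin 6) ℂ :=
  Matrix.of
    ![![0, 0, 1, -1, 0, 0],
      ![-p, 0, 0, 0, 0, 0],
      ![η, 0, 0, 0, 0, 1],
      ![-η, 0, 0, 0, 0, -1],
      ![-p, 0, 0, 0, 0, 0],
      ![0, -p, η, -η, -p, 0]]

end

@[simp] private lemma cons_val_five' {α : Type*} {m : ℕ}
    (x : α) (u : Fin m.succ.succ.succ.succ.succ → α) :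
    Matrix.vecCons x u 5 =
      Matrix.vecHead (Matrix.vecTail (Matrix.vecTail (Matrix.vecTail (Matrix.vecTail u)))) :=
  rfl

set_option maxHeartbeats 4000000 in
set_option maxRecDepth 8000 in
private lemma det_val (η p z : ℂ) :
      (Matrix.of
        ![![z, 0, -1, 1, 0, 0],
          ![p, z, 0, 0, 0, 0],
          ![-η, 0, z, 0, 0, -1],
          ![η, 0, 0, z, 0, 1],
          ![p, 0, 0, 0, z, 0],
          ![0, p, -η, η, p, z]]).det = z ^ 6 - 4 * η * z ^ 4 - 4 * p ^ 2 * z ^ 2 := by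
  simp only [Matrix.det_succ_row_zero, Fin.sum_univ_succ, Matrix.submatrix_apply,
    Matrix.submatrix_submatrix, Matrix.det_unique, Fin.default_eq_zero, Function.comp_apply,
    Fin.zero_succAbove, Fin.succ_succAbove_zero, Fin.succ_succAbove_succ,
    Fin.val_succ, Fin.val_zero, Finset.univ_unique, Finset.sum_singleton,
    Matrix.of_apply, Matrix.cons_val', Matrix.cons_val_zero, Matrix.cons_val_succ,
    Matrix.head_cons, Matrix.head_fin_const, Matrix.cons_val_fin_one, Matrix.empty_val']
  norm_num
  ring

private lemma cp_eval (η p z : ℂ) :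
    (Ainf η p).charpoly.eval z = z ^ 6 - 4 * η * z ^ 4 - 4 * p ^ 2 * z ^ 2 := by
  have h : (Ainf η p).charpoly.eval z =
      (Matrix.of
        ![![z, 0, -1, 1, 0, 0],
          ![p, z, 0, 0, 0, 0],
          ![-η, 0, z, 0, 0, -1],
          ![η, 0, 0, z, 0, 1],
          ![p, 0, 0, 0, z, 0],
          ![0, p, -η, η, p, z]]).det := by
    rw [Matrix.charpoly, ← Polynomial.coe_evalRingHom, RingHom.map_det]
    congr 1
    ext i j
    fin_cases i <;> fin_cases j <;>
      simp [Matrix.charmatrix_apply, Ainf, Matrix.diagonal, Matrix.vecHead, Matrix.vecTail]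
  rw [h, det_val]

/-- If `Re μ₁ > 0` and `Re μ₂ > 0`, with `η = (μ₁² + μ₂²)/2` and `p = i(μ₂² − μ₁²)/2`,
then `σ⁺ = μ₁ + μ₂` and `σ⁻ = −(μ₁ + μ₂)` are the unique eigenvalues of `A∞(η,p)` of most
positive and most negative real part, respectively. -/
theorem Ainf_dominant_eigenvalues (μ₁ μ₂ : ℂ) (h₁ : 0 < μ₁.re) (h₂ : 0 < μ₂.re)
    (η p : ℂ) (hη : η = (μ₁ ^ 2 + μ₂ ^ 2) / 2) (hp : p = Complex.I * (μ₂ ^ 2 - μ₁ ^ 2) / 2) :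
    (Ainf η p).charpoly.IsRoot (μ₁ + μ₂) ∧
    (∀ z : ℂ, (Ainf η p).charpoly.IsRoot z → z ≠ μ₁ + μ₂ → z.re < (μ₁ + μ₂).re) ∧
    (Ainf η p).charpoly.IsRoot (-(μ₁ + μ₂)) ∧
    (∀ z : ℂ, (Ainf η p).charpoly.IsRoot z → z ≠ -(μ₁ + μ₂) → (-(μ₁ + μ₂)).re < z.re) := by
  have key : ∀ z : ℂ, (Ainf η p).charpoly.eval z =
      z ^ 2 * (z - (μ₁ + μ₂)) * (z + (μ₁ + μ₂)) * (z - (μ₁ - μ₂)) * (z + (μ₁ - μ₂)) := by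
    intro z
    rw [cp_eval, hη, hp]
    have hI : Complex.I ^ 2 = -1 := Complex.I_sq
    field_simp
    ring_nf
    rw [hI]
    ring
  have hroots : ∀ z : ℂ, (Ainf η p).charpoly.IsRoot z →
      z = 0 ∨ z = μ₁ + μ₂ ∨ z = -(μ₁ + μ₂) ∨ z = μ₁ - μ₂ ∨ z = -(μ₁ - μ₂) := by
    intro z hz
    have := hz
    rw [IsRoot, key] at this
    rcases mul_eq_zero.1 this with h | h
    · rcases mul_eq_zero.1 h with h | h
      · rcases mul_eq_zero.1 h with h | h
        · rcases mul_eq_zero.1 h with h | h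
          · exact Or.inl (pow_eq_zero_iff (by norm_num) |>.1 h)
          · exact Or.inr (Or.inl (by linear_combination h))
        · exact Or.inr (Or.inr (Or.inl (by linear_combination h)))
      · exact Or.inr (Or.inr (Or.inr (Or.inl (by linear_combination h))))
    · exact Or.inr (Or.inr (Or.inr (Or.inr (by linear_combination h))))
  have hσ : (Ainf η p).charpoly.IsRoot (μ₁ + μ₂) := by
    rw [IsRoot, key]; ring
  have hσ' : (Ainf η p).charpoly.IsRoot (-(μ₁ + μ₂)) := by
    rw [IsRoot, key]; ring
  refine ⟨hσ, ?_, hσ', ?_⟩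
  · intro z hz hne
    rcases hroots z hz with rfl | rfl | rfl | rfl | rfl
    · simp only [Complex.zero_re, Complex.add_re]; linarith
    · exact absurd rfl hne
    · simp only [Complex.neg_re, Complex.add_re]; linarith
    · simp only [Complex.sub_re, Complex.add_re]; linarith
    · simp only [Complex.neg_re, Complex.sub_re, Complex.add_re]; linarith
  · intro z hz hne
    rcases hroots z hz with rfl | rfl | rfl | rfl | rfl
    · simp only [Complex.zero_re, Complex.neg_re, Complex.add_re]; linarith
    · simp only [Complex.neg_re, Complex.add_re]; linarith
    · exact absurd rfl hne
    · simp only [Complex.neg_re, Complex.sub_re, Complex.add_re]; linarith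
    · simp only [Complex.neg_re, Complex.sub_re, Complex.add_re]; linarith
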